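/- Splitting lemma: let |s⟩ be an n-qubit stabiliser state that is not proportional to a computational basis state, with support of size 2^r (r ≥ 1). Then there exist two orthogonal stabiliser states |t1⟩, |t2⟩, stabilised by a common Lagrangian subspace and each supported on exactly 2^{r-1} computational basis states with disjoint supports, such that |s⟩ = 2^{-1/2}(|t1⟩ + |t2⟩). -/

import Mathlib

open scoped Matrix ComplexConjugate

/-- Bit vectors of length `n` over `ℤ/2`. -/
abbrev V2 (n : ℕ) := Fin n → ZMod 2

/-- Dot product over `ℤ/2`. -/
def dotZ2 {n : ℕ} (a b : V2 n) : ZMod 2 := ∑ i, a i * b i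

/-- The symplectic product on `(ℤ/2)^{2n}`: `[(p₁,q₁),(p₂,q₂)] = p₁·q₂ - p₂·q₁`. -/
def symp {n : ℕ} (x y : V2 n × V2 n) : ZMod 2 := dotZ2 x.1 y.2 - dotZ2 y.1 x.2

/-- The computational basis vector `|z⟩` in `ℂ^{2^n}`. -/
noncomputable def basisVec {n : ℕ} (z : V2 n) : V2 n → ℂ := fun y => if y = z then 1 else 0

/-- The Pauli operator `W(p,q) = (-i)^{p·q mod 4} Z^p X^q`, where
`Z^p X^q |z⟩ = (-1)^{(z+q)·p} |z+q⟩` (bits of `p·q` lifted to integers). -/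
noncomputable def W {n : ℕ} (p q : V2 n) : Matrix (V2 n) (V2 n) ℂ :=
  Matrix.of fun y z =>
    if y = z + q then
      (-Complex.I) ^ ((∑ i, (p i).val * (q i).val) % 4) * (-1 : ℂ) ^ (dotZ2 (z + q) p).val
    else 0
/-- A subspace of `(ℤ/2)^{2n}` is isotropic if the symplectic form vanishes on it. -/
def IsIsotropic {n : ℕ} (L : Submodule (ZMod 2) (V2 n × V2 n)) : Prop :=
  ∀ x ∈ L, ∀ y ∈ L, symp x y = 0

/-- A Lagrangian subspace: a maximal isotropic subspace of `(ℤ/2)^{2n}`. -/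
def IsLagrangian {n : ℕ} (L : Submodule (ZMod 2) (V2 n × V2 n)) : Prop :=
  IsIsotropic L ∧ ∀ L', IsIsotropic L' → L ≤ L' → L' = L
/-- A stabiliser state: a unit-norm simultaneous eigenvector of `n` commuting Pauli
operators whose exponent vectors span a Lagrangian subspace of `(ℤ/2)^{2n}`. -/
noncomputable def IsStabiliserState {n : ℕ} (ψ : V2 n → ℂ) : Prop :=
  (∑ z, ‖ψ z‖ ^ 2) = 1 ∧
  ∃ (p q : Fin n → V2 n) (lam : Fin n → ZMod 2),
    IsLagrangian (Submodule.span (ZMod 2) (Set.range fun j => (p j, q j))) ∧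
    ∀ j, (W (p j) (q j)).mulVec ψ = ((-1 : ℂ) ^ (lam j).val) • ψ

lemma V2.add_self {n : ℕ} (v : V2 n) : v + v = 0 := by
  funext i; exact CharTwo.add_self_eq_zero (v i)

lemma W_mulVec {n : ℕ} (p q : V2 n) (f : V2 n → ℂ) (z : V2 n) :
    (W p q).mulVec f z
      = (-Complex.I) ^ ((∑ i, (p i).val * (q i).val) % 4) * (-1 : ℂ) ^ (dotZ2 z p).val
          * f (z + q) := by
  unfold Matrix.mulVec dotProduct W
  rw [Finset.sum_eq_single (z + q)]
  · simp only [Matrix.of_apply]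
    rw [if_pos (by rw [add_assoc, V2.add_self, add_zero] : z = z + q + q),
      add_assoc, V2.add_self, add_zero, mul_assoc]
  · intro y _ hy
    simp only [Matrix.of_apply]
    rw [if_neg, zero_mul]
    intro h
    exact hy (by rw [h, add_assoc, V2.add_self, add_zero])
  · intro h; exact absurd (Finset.mem_univ _) h

lemma zmod2_cases (x : ZMod 2) : x = 0 ∨ x = 1 := by revert x; decide

lemma np_add (x y : ZMod 2) : ((-1 : ℂ)) ^ (x + y).val = (-1 : ℂ) ^ x.val * (-1 : ℂ) ^ y.val := by
  rcases zmod2_cases x with hx | hx <;> rcases zmod2_cases y with hy | hy <;>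
    subst hx <;> subst hy <;>
    norm_num [ZMod.val_one, show ZMod.val (2:ZMod 2) = 0 from by decide]

lemma dotZ2_add_left {n : ℕ} (a b c : V2 n) : dotZ2 (a + b) c = dotZ2 a c + dotZ2 b c := by
  unfold dotZ2; rw [← Finset.sum_add_distrib]; exact Finset.sum_congr rfl fun i _ => by
    simp [add_mul]

lemma dotZ2_cast {n : ℕ} (p q : V2 n) :
    dotZ2 q p = ((∑ i, (p i).val * (q i).val : ℕ) : ZMod 2) := by
  unfold dotZ2
  push_cast
  exact Finset.sum_congr rfl fun i _ => by
    rw [ZMod.natCast_val, ZMod.natCast_val, ZMod.cast_id, ZMod.cast_id, mul_comm]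

lemma W_invol {n : ℕ} (p q : V2 n) (f : V2 n → ℂ) :
    (W p q).mulVec ((W p q).mulVec f) = f := by
  funext z
  rw [W_mulVec, W_mulVec]
  set m := ∑ i, (p i).val * (q i).val with hm
  rw [add_assoc, V2.add_self, add_zero, dotZ2_add_left, np_add]
  have h1 : (dotZ2 q p).val = m % 2 := by rw [dotZ2_cast, ZMod.val_natCast]
  have h2 : ((-1 : ℂ)) ^ (m % 4) * (-1 : ℂ) ^ (m % 2) = 1 := by
    rw [← pow_add]
    rw [neg_one_pow_eq_one_iff_even (by norm_num : (-1:ℂ) ≠ 1)]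
    have : m % 4 % 2 = m % 2 := Nat.mod_mod_of_dvd m (by norm_num)
    rw [Nat.even_add, Nat.even_iff, Nat.even_iff]
    omega
  have h3 : ((-Complex.I) ^ (m % 4)) * ((-Complex.I) ^ (m % 4)) = (-1 : ℂ) ^ (m % 4) := by
    rw [← mul_pow]
    norm_num [Complex.I_mul_I]
  have h4 : ((-1 : ℂ)) ^ (dotZ2 z p).val * (-1 : ℂ) ^ (dotZ2 z p).val = 1 := by
    rw [← mul_pow]; norm_num
  calc (-Complex.I) ^ (m % 4) * (-1 : ℂ) ^ (dotZ2 z p).val *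
      ((-Complex.I) ^ (m % 4) * ((-1 : ℂ) ^ (dotZ2 z p).val * (-1 : ℂ) ^ (dotZ2 q p).val) * f z)
      = (((-Complex.I) ^ (m % 4)) * ((-Complex.I) ^ (m % 4))) *
        (((-1 : ℂ)) ^ (dotZ2 z p).val * (-1 : ℂ) ^ (dotZ2 z p).val) *
        ((-1 : ℂ) ^ (dotZ2 q p).val) * f z := by ring
    _ = f z := by rw [h3, h4, h1, mul_one, h2, one_mul]

lemma dotZ2_add_right {n : ℕ} (a b c : V2 n) : dotZ2 a (b + c) = dotZ2 a b + dotZ2 a c := by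
  unfold dotZ2; rw [← Finset.sum_add_distrib]; exact Finset.sum_congr rfl fun i _ => by
    simp [mul_add]

lemma W_add_mulVec {n : ℕ} (p q p' q' : V2 n) :
    ∃ C : ℂ, C ≠ 0 ∧ ∀ f, (W (p + p') (q + q')).mulVec f
      = C • ((W p q).mulVec ((W p' q').mulVec f)) := by
  set ma := ∑ i, (p i).val * (q i).val
  set mb := ∑ i, (p' i).val * (q' i).val
  set ms := ∑ i, (p i + p' i).val * (q i + q' i).val with hms
  have hI : (-Complex.I) ≠ 0 := by simpa using Complex.I_ne_zero
  have hden : ((-Complex.I) ^ (ma % 4) * (-Complex.I) ^ (mb % 4)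
      * (-1 : ℂ) ^ (dotZ2 q p').val) ≠ 0 := by
    apply mul_ne_zero (mul_ne_zero (pow_ne_zero _ hI) (pow_ne_zero _ hI))
    apply pow_ne_zero; norm_num
  refine ⟨(-Complex.I) ^ (ms % 4) * ((-Complex.I) ^ (ma % 4) * (-Complex.I) ^ (mb % 4)
      * (-1 : ℂ) ^ (dotZ2 q p').val)⁻¹,
    mul_ne_zero (pow_ne_zero _ hI) (inv_ne_zero hden), fun f => ?_⟩
  funext z
  rw [Pi.smul_apply, W_mulVec, W_mulVec, W_mulVec]
  rw [dotZ2_add_right z p p', np_add, ← add_assoc]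
  have : dotZ2 (z + q) p' = dotZ2 z p' + dotZ2 q p' := dotZ2_add_left z q p'
  rw [this, np_add]
  rw [smul_eq_mul]
  simp only [Pi.add_apply]
  rw [← hms]
  field_simp
  ring

lemma dotZ2_smul_right {n : ℕ} (s : ZMod 2) (a b : V2 n) : dotZ2 a (s • b) = s * dotZ2 a b := by
  unfold dotZ2; rw [Finset.mul_sum]; exact Finset.sum_congr rfl fun i _ => by
    simp only [Pi.smul_apply, smul_eq_mul]; ring

lemma dotZ2_comm' {n : ℕ} (a b : V2 n) : dotZ2 a b = dotZ2 b a := by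
  unfold dotZ2; exact Finset.sum_congr rfl fun i _ => mul_comm _ _

lemma dotZ2_smul_left {n : ℕ} (s : ZMod 2) (a b : V2 n) : dotZ2 (s • a) b = s * dotZ2 a b := by
  rw [dotZ2_comm', dotZ2_smul_right, dotZ2_comm']

lemma symp_comm {n : ℕ} (x y : V2 n × V2 n) : symp x y = symp y x := by
  unfold symp; ring_nf
  rcases zmod2_cases (dotZ2 x.1 y.2) with h | h <;>
    rcases zmod2_cases (dotZ2 y.1 x.2) with h' | h' <;> rw [h, h'] <;> decide

lemma symp_self {n : ℕ} (x : V2 n × V2 n) : symp x x = 0 := by unfold symp; rw [sub_self]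

lemma symp_add_left {n : ℕ} (x y z : V2 n × V2 n) :
    symp (x + y) z = symp x z + symp y z := by
  unfold symp
  rw [Prod.fst_add, Prod.snd_add, dotZ2_add_left, dotZ2_add_right]
  ring

lemma symp_add_right {n : ℕ} (x y z : V2 n × V2 n) :
    symp x (y + z) = symp x y + symp x z := by
  rw [symp_comm, symp_add_left, symp_comm y x, symp_comm z x]

lemma symp_smul_left {n : ℕ} (s : ZMod 2) (x y : V2 n × V2 n) :
    symp (s • x) y = s * symp x y := by
  unfold symp
  rw [Prod.smul_fst, Prod.smul_snd, dotZ2_smul_left, dotZ2_smul_right]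
  ring

lemma symp_smul_right {n : ℕ} (s : ZMod 2) (x y : V2 n × V2 n) :
    symp x (s • y) = s * symp x y := by
  rw [symp_comm, symp_smul_left, symp_comm]

lemma lagr_perp_le {n : ℕ} {L : Submodule (ZMod 2) (V2 n × V2 n)} (hL : IsLagrangian L)
    (x : V2 n × V2 n) (hx : ∀ y ∈ L, symp x y = 0) : x ∈ L := by
  have hiso : IsIsotropic (L ⊔ Submodule.span (ZMod 2) {x}) := by
    intro u hu v hv
    rw [Submodule.mem_sup] at hu hv
    obtain ⟨a, ha, sa, hsa, rfl⟩ := hu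
    obtain ⟨b, hb, sb, hsb, rfl⟩ := hv
    rw [Submodule.mem_span_singleton] at hsa hsb
    obtain ⟨ca, rfl⟩ := hsa
    obtain ⟨cb, rfl⟩ := hsb
    simp only [symp_add_left, symp_add_right, symp_smul_left, symp_smul_right]
    rw [hL.1 a ha b hb, symp_self, hx b hb, ← symp_comm x a, hx a ha]
    ring
  have := hL.2 _ hiso le_sup_left
  rw [← this]
  exact Submodule.mem_sup_right (Submodule.mem_span_singleton_self x)

lemma dotZ2_zero_right {n : ℕ} (a : V2 n) : dotZ2 a 0 = 0 := by unfold dotZ2; simp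

lemma dotZ2_zero_left {n : ℕ} (a : V2 n) : dotZ2 0 a = 0 := by unfold dotZ2; simp

lemma isotropic_span_range {n m : ℕ} (f : Fin m → V2 n × V2 n)
    (h : ∀ i j, symp (f i) (f j) = 0) :
    IsIsotropic (Submodule.span (ZMod 2) (Set.range f)) := by
  intro x hx y hy
  induction hx using Submodule.span_induction with
  | mem a ha =>
    induction hy using Submodule.span_induction with
    | mem b hb =>
      obtain ⟨i, rfl⟩ := ha
      obtain ⟨j, rfl⟩ := hb
      exact h i j
    | zero => unfold symp; simp [dotZ2_zero_right, dotZ2_zero_left]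
    | add u v _ _ hu hv => rw [symp_add_right, hu, hv, add_zero]
    | smul s u _ hu => rw [symp_smul_right, hu, mul_zero]
  | zero => unfold symp; simp [dotZ2_zero_right, dotZ2_zero_left]
  | add u v _ _ hu hv => rw [symp_add_left, hu, hv, add_zero]
  | smul s u _ hu => rw [symp_smul_left, hu, mul_zero]

lemma zmod2_add_self (a : ZMod 2) : a + a = 0 := CharTwo.add_self_eq_zero a

lemma new_lagrangian {n : ℕ} (g : Fin n → V2 n × V2 n)
    (hL : IsLagrangian (Submodule.span (ZMod 2) (Set.range g)))
    (j₀ : Fin n) (x₀ : V2 n × V2 n) (h₀ : symp x₀ (g j₀) = 1) :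
    IsLagrangian (Submodule.span (ZMod 2)
      (Set.range fun j => if j = j₀ then x₀ else g j + (symp x₀ (g j)) • g j₀)) := by
  set L := Submodule.span (ZMod 2) (Set.range g) with hLdef
  set g' : Fin n → V2 n × V2 n :=
    fun j => if j = j₀ then x₀ else g j + (symp x₀ (g j)) • g j₀ with hg'
  set L' := Submodule.span (ZMod 2) (Set.range g') with hL'def
  set K := Submodule.span (ZMod 2) (Set.range fun j => if j = j₀ then 0 else g' j) with hK
  have hgL : ∀ j, g j ∈ L := fun j => Submodule.subset_span (Set.mem_range_self j)
  have hg'L' : ∀ j, g' j ∈ L' := fun j => Submodule.subset_span (Set.mem_range_self j)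
  have hx₀L' : x₀ ∈ L' := by
    have := hg'L' j₀; simp only [hg', if_pos rfl] at this; exact this
  -- pairwise symplectic orthogonality of the new generators
  have pairwise : ∀ i j, symp (g' i) (g' j) = 0 := by
    have key : ∀ j, j ≠ j₀ → symp x₀ (g' j) = 0 := by
      intro j hj
      simp only [hg', if_neg hj]
      rw [symp_add_right, symp_smul_right, h₀, mul_one, zmod2_add_self]
    intro i j
    by_cases hi : i = j₀ <;> by_cases hj : j = j₀
    · subst hi; subst hj; exact symp_self _
    · subst hi
      have := key j hj
      simp only [hg', if_pos rfl] at this ⊢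
      exact this
    · subst hj
      rw [symp_comm]
      have := key i hi
      simp only [hg', if_pos rfl] at this ⊢
      exact this
    · simp only [hg', if_neg hi, if_neg hj]
      simp only [symp_add_left, symp_add_right, symp_smul_left, symp_smul_right]
      rw [hL.1 _ (hgL i) _ (hgL j), hL.1 _ (hgL i) _ (hgL j₀),
        hL.1 _ (hgL j₀) _ (hgL j), hL.1 _ (hgL j₀) _ (hgL j₀)]
      ring
  have iso' : IsIsotropic L' := isotropic_span_range g' pairwise
  have hKL' : K ≤ L' := by
    rw [hK, Submodule.span_le]
    rintro _ ⟨j, rfl⟩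
    by_cases hj : j = j₀
    · simp only [if_pos hj]; exact Submodule.zero_mem _
    · simp only [if_neg hj]; exact hg'L' j
  have hKperpx₀ : ∀ k ∈ K, symp x₀ k = 0 := fun k hk => iso' x₀ hx₀L' k (hKL' hk)
  have hg'jL : ∀ j, j ≠ j₀ → g' j ∈ L := by
    intro j hj
    simp only [hg', if_neg hj]
    exact Submodule.add_mem _ (hgL j) (Submodule.smul_mem _ _ (hgL j₀))
  have hLsub : L ≤ K ⊔ Submodule.span (ZMod 2) {g j₀} := by
    rw [hLdef, Submodule.span_le]
    rintro _ ⟨j, rfl⟩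
    by_cases hj : j = j₀
    · subst hj
      exact Submodule.mem_sup_right (Submodule.mem_span_singleton_self _)
    · have hdecomp : g j = g' j + (symp x₀ (g j)) • g j₀ := by
        rw [hg']; simp only [if_neg hj]
        rw [add_assoc, ← add_smul, zmod2_add_self, zero_smul, add_zero]
      rw [hdecomp]
      refine Submodule.add_mem _ (Submodule.mem_sup_left ?_)
        (Submodule.mem_sup_right (Submodule.smul_mem _ _ (Submodule.mem_span_singleton_self _)))
      have hmem : (if j = j₀ then 0 else g' j) ∈ K := by
        rw [hK]; exact Submodule.subset_span ⟨j, rfl⟩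
      rwa [if_neg hj] at hmem
  constructor
  · exact iso'
  · intro L'' hiso'' hle
    refine le_antisymm (fun x hx'' => ?_) hle
    have hxperp : ∀ y ∈ L', symp x y = 0 := fun y hy => hiso'' x hx'' y (hle hy)
    set b := symp x (g j₀) with hb
    set x' := x + b • x₀ with hx'
    have hx'L : x' ∈ L := by
      apply lagr_perp_le hL
      intro y hyL
      have hy2 : y ∈ K ⊔ Submodule.span (ZMod 2) {g j₀} := hLsub hyL
      rw [Submodule.mem_sup] at hy2
      obtain ⟨k, hk, s, hs, rfl⟩ := hy2
      rw [Submodule.mem_span_singleton] at hs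
      obtain ⟨a, rfl⟩ := hs
      rw [hx']
      simp only [symp_add_left, symp_add_right, symp_smul_left, symp_smul_right]
      rw [hxperp k (hKL' hk), hKperpx₀ k hk, ← hb, h₀]
      ring_nf
      rw [show ((2 : ZMod 2) = 0) from rfl, mul_zero]
    have hx'2 : x' ∈ K ⊔ Submodule.span (ZMod 2) {g j₀} := hLsub hx'L
    rw [Submodule.mem_sup] at hx'2
    obtain ⟨k', hk', s', hs', hxeq⟩ := hx'2
    rw [Submodule.mem_span_singleton] at hs'
    obtain ⟨a', rfl⟩ := hs'
    have ha' : a' = 0 := by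
      have e1 : symp x₀ x' = 0 := by
        rw [hx', symp_add_right, symp_smul_right, symp_self, mul_zero, add_zero,
          symp_comm, hxperp x₀ hx₀L']
      rw [← hxeq, symp_add_right, symp_smul_right, hKperpx₀ k' hk', h₀, mul_one,
        zero_add] at e1
      exact e1
    have hx'K : x' ∈ L' := by
      rw [← hxeq, ha', zero_smul, add_zero]
      exact hKL' hk'
    have : x = x' + b • x₀ := by
      rw [hx', add_assoc, ← add_smul, zmod2_add_self, zero_smul, add_zero]
    rw [this]
    exact Submodule.add_mem _ hx'K (Submodule.smul_mem _ _ hx₀L')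

lemma np_inj (x y : ZMod 2) (h : ((-1:ℂ))^x.val = (-1:ℂ)^y.val) : x = y := by
  rcases zmod2_cases x with hx | hx <;> rcases zmod2_cases y with hy | hy <;>
    subst hx <;> subst hy <;> first
      | rfl
      | (exfalso; norm_num [ZMod.val_one] at h)

lemma eig_pm {n : ℕ} (P Q : V2 n) (f : V2 n → ℂ) (hf : f ≠ 0) (μ : ℂ)
    (h : (W P Q).mulVec f = μ • f) :
    ∃ l : ZMod 2, (W P Q).mulVec f = ((-1:ℂ))^l.val • f := by
  have h2 := W_invol P Q f
  rw [h, Matrix.mulVec_smul, h, smul_smul] at h2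
  obtain ⟨z, hz⟩ := Function.ne_iff.mp hf
  have hz' : f z ≠ 0 := hz
  have hμ : μ * μ = 1 := by
    have hzz := congrFun h2 z
    rw [Pi.smul_apply, smul_eq_mul] at hzz
    apply mul_right_cancel₀ hz'
    rw [one_mul]
    exact hzz
  have : (μ - 1) * (μ + 1) = 0 := by linear_combination hμ
  rcases mul_eq_zero.mp this with h' | h'
  · refine ⟨0, ?_⟩
    rw [h, sub_eq_zero.mp h']
    norm_num
  · refine ⟨1, ?_⟩
    rw [h, eq_neg_of_add_eq_zero_left h']
    norm_num [ZMod.val_one]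

lemma proj_eig {n : ℕ} (P Q c : V2 n) (hcQ : dotZ2 c Q = 0) (f : V2 n → ℂ) (μ e : ℂ)
    (v : ZMod 2) (h : (W P Q).mulVec f = μ • f) :
    (W P Q).mulVec (fun z => if dotZ2 c z = v then e * f z else 0)
      = μ • (fun z => if dotZ2 c z = v then e * f z else 0) := by
  funext z
  rw [W_mulVec, Pi.smul_apply, smul_eq_mul]
  have harg : dotZ2 c (z + Q) = dotZ2 c z := by rw [dotZ2_add_right, hcQ, add_zero]
  simp only [harg]
  by_cases hz : dotZ2 c z = v
  · rw [if_pos hz, if_pos hz]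
    have := congrFun h z
    rw [W_mulVec, Pi.smul_apply, smul_eq_mul] at this
    calc (-Complex.I) ^ ((∑ i, (P i).val * (Q i).val) % 4) * (-1:ℂ) ^ (dotZ2 z P).val
          * (e * f (z + Q))
        = e * ((-Complex.I) ^ ((∑ i, (P i).val * (Q i).val) % 4) * (-1:ℂ) ^ (dotZ2 z P).val
          * f (z + Q)) := by ring
      _ = e * (μ * f z) := by rw [this]
      _ = μ * (e * f z) := by ring
  · rw [if_neg hz, if_neg hz, mul_zero, mul_zero]

lemma diag_eig {n : ℕ} (c : V2 n) (v : ZMod 2) (t : V2 n → ℂ)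
    (ht : ∀ z, dotZ2 c z ≠ v → t z = 0) :
    (W c 0).mulVec t = ((-1:ℂ))^v.val • t := by
  funext z
  rw [W_mulVec, Pi.smul_apply, smul_eq_mul]
  have h0 : (∑ i, (c i).val * ((0 : V2 n) i).val) = 0 := by simp
  rw [h0, pow_zero, one_mul, add_zero, dotZ2_comm' z c]
  by_cases hz : dotZ2 c z = v
  · rw [hz]
  · rw [ht z hz, mul_zero, mul_zero]

lemma dotZ2_single_left {n : ℕ} (i : Fin n) (a : V2 n) : dotZ2 (Pi.single i 1) a = a i := by
  unfold dotZ2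
  rw [Finset.sum_eq_single i]
  · simp
  · intro j _ hj; simp [Pi.single_apply, hj.symm]
  · intro h; exact absurd (Finset.mem_univ _) h

lemma dotZ2_single_right {n : ℕ} (i : Fin n) (a : V2 n) : dotZ2 a (Pi.single i 1) = a i := by
  rw [dotZ2_comm', dotZ2_single_left]

/-- If all the `q j` vanish, the state is a scaled basis vector. -/

lemma all_q_zero_case {n : ℕ} (ψ : V2 n → ℂ) (hψne : ψ ≠ 0)
    (p q : Fin n → V2 n) (lam : Fin n → ZMod 2)
    (hLag : IsLagrangian (Submodule.span (ZMod 2) (Set.range fun j => (p j, q j))))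
    (heig : ∀ j, (W (p j) (q j)).mulVec ψ = ((-1 : ℂ) ^ (lam j).val) • ψ)
    (hq0 : ∀ j, q j = 0) : ∃ (z : V2 n) (c : ℂ), ψ = c • basisVec z := by
  -- on the support, `dotZ2 z (p j) = lam j`
  have hdiag : ∀ j z, ψ z ≠ 0 → dotZ2 z (p j) = lam j := by
    intro j z hz
    have := congrFun (heig j) z
    rw [W_mulVec, Pi.smul_apply, smul_eq_mul, hq0 j] at this
    have h0 : (∑ i, ((p j) i).val * ((0 : V2 n) i).val) = 0 := by simp
    rw [h0, pow_zero, one_mul, add_zero] at this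
    exact np_inj _ _ (mul_right_cancel₀ hz this)
  -- the span of the `(p j, 0)` is everything diagonal
  have hD : ∀ w : V2 n, (w, (0 : V2 n)) ∈
      Submodule.span (ZMod 2) (Set.range fun j => (p j, q j)) := by
    intro w
    set D : Submodule (ZMod 2) (V2 n × V2 n) :=
      Submodule.prod ⊤ ⊥ with hD
    have hiso : IsIsotropic D := by
      intro x hx y hy
      rw [hD, Submodule.mem_prod] at hx hy
      have hx2 : x.2 = 0 := hx.2
      have hy2 : y.2 = 0 := hy.2
      unfold symp
      rw [hx2, hy2, dotZ2_zero_right, dotZ2_zero_right, sub_zero]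
    have hle : Submodule.span (ZMod 2) (Set.range fun j => (p j, q j)) ≤ D := by
      rw [Submodule.span_le]
      rintro _ ⟨j, rfl⟩
      simp only [SetLike.mem_coe, hD, Submodule.mem_prod]
      exact ⟨trivial, by rw [hq0 j]; exact Submodule.zero_mem _⟩
    have heq := hLag.2 D hiso hle
    rw [← heq, hD, Submodule.mem_prod]
    exact ⟨trivial, Submodule.zero_mem _⟩
  -- two support points are equal
  have huniq : ∀ z z', ψ z ≠ 0 → ψ z' ≠ 0 → z = z' := by
    intro z z' hz hz'
    have key : ∀ y ∈ Submodule.span (ZMod 2) (Set.range fun j => (p j, q j)),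
        dotZ2 (z + z') y.1 = 0 := by
      intro y hy
      induction hy using Submodule.span_induction with
      | mem a ha =>
        obtain ⟨j, rfl⟩ := ha
        rw [dotZ2_add_left, dotZ2_comm' z, dotZ2_comm' z']
        rw [dotZ2_comm' _ z, dotZ2_comm' _ z']
        rw [hdiag j z hz, hdiag j z' hz', zmod2_add_self]
      | zero => rw [Prod.fst_zero, dotZ2_zero_right]
      | add u v _ _ hu hv => rw [Prod.fst_add, dotZ2_add_right, hu, hv, add_zero]
      | smul s u _ hu => rw [Prod.smul_fst, dotZ2_smul_right, hu, mul_zero]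
    funext i
    have hkey := key _ (hD (Pi.single i 1))
    rw [dotZ2_single_right] at hkey
    have hzz : z i + z' i = 0 := hkey
    rcases zmod2_cases (z i) with h | h <;> rcases zmod2_cases (z' i) with h' | h' <;>
      rw [h, h'] at hzz ⊢ <;> revert hzz <;> decide
  obtain ⟨z₀, hz₀⟩ := Function.ne_iff.mp hψne
  refine ⟨z₀, ψ z₀, funext fun y => ?_⟩
  rw [Pi.smul_apply, basisVec, smul_eq_mul]
  by_cases hy : y = z₀
  · rw [if_pos hy, mul_one, hy]
  · rw [if_neg hy, mul_zero]
    by_contra hyne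
    exact hy (huniq y z₀ hyne hz₀)

lemma zmod2_eq_one_iff (x : ZMod 2) : x = 1 ↔ ¬ x = 0 := by revert x; decide

/-- Splitting lemma: a noncomputational stabiliser state `|s⟩` with support of size `2^r`
splits as `2^{-1/2}(|t₁⟩ + |t₂⟩)` for two orthogonal stabiliser states `t₁, t₂` stabilised
by a common Lagrangian subspace, each supported on exactly `2^{r-1}` computational basis
states, with disjoint supports. -/
theorem splitting_lemma {n : ℕ} (ψ : V2 n → ℂ) (hψ : IsStabiliserState ψ)
    (hnc : ∀ (z : V2 n) (c : ℂ), ψ ≠ c • basisVec z)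
    (r : ℕ) (hr : 1 ≤ r) (hsupp : Nat.card {z : V2 n // ψ z ≠ 0} = 2 ^ r) :
    ∃ (t₁ t₂ : V2 n → ℂ) (p q : Fin n → V2 n) (l₁ l₂ : Fin n → ZMod 2),
      IsLagrangian (Submodule.span (ZMod 2) (Set.range fun j => (p j, q j))) ∧
      (∑ z, ‖t₁ z‖ ^ 2) = 1 ∧ (∑ z, ‖t₂ z‖ ^ 2) = 1 ∧
      (∀ j, (W (p j) (q j)).mulVec t₁ = ((-1 : ℂ) ^ (l₁ j).val) • t₁) ∧
      (∀ j, (W (p j) (q j)).mulVec t₂ = ((-1 : ℂ) ^ (l₂ j).val) • t₂) ∧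
      (∑ z, conj (t₁ z) * t₂ z) = 0 ∧
      Nat.card {z : V2 n // t₁ z ≠ 0} = 2 ^ (r - 1) ∧
      Nat.card {z : V2 n // t₂ z ≠ 0} = 2 ^ (r - 1) ∧
      (∀ z, t₁ z ≠ 0 → t₂ z = 0) ∧
      ψ = ((Real.sqrt 2 : ℂ))⁻¹ • (t₁ + t₂) := by
  obtain ⟨hnorm, p, q, lam, hLag, heig⟩ := hψ
  have hψne : ψ ≠ 0 := by
    intro h; rw [h] at hnorm; simp at hnorm
  -- find a generator with nonzero X-part
  have hj₀ : ∃ j₀, q j₀ ≠ 0 := by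
    by_contra h
    push_neg at h
    obtain ⟨z, cc, hzc⟩ := all_q_zero_case ψ hψne p q lam hLag heig h
    exact hnc z cc hzc
  obtain ⟨j₀, hq₀⟩ := hj₀
  obtain ⟨i₀, hi₀⟩ := Function.ne_iff.mp hq₀
  have hi₀' : q j₀ i₀ ≠ 0 := hi₀
  set c : V2 n := Pi.single i₀ 1 with hc
  have hcq : dotZ2 c (q j₀) = 1 := by
    rw [hc, dotZ2_single_left]
    rcases zmod2_cases (q j₀ i₀) with h | h
    · exact absurd h hi₀'
    · exact h
  set g : Fin n → V2 n × V2 n := fun j => (p j, q j) with hg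
  set x₀ : V2 n × V2 n := (c, 0) with hx₀
  have hS : ∀ j, symp x₀ (g j) = dotZ2 c (q j) := by
    intro j
    unfold symp
    rw [hx₀, hg]
    dsimp only
    rw [dotZ2_zero_right, sub_zero]
  have h₀ : symp x₀ (g j₀) = 1 := by rw [hS, hcq]
  set g' : Fin n → V2 n × V2 n :=
    fun j => if j = j₀ then x₀ else g j + (symp x₀ (g j)) • g j₀ with hg'
  have hLag' : IsLagrangian (Submodule.span (ZMod 2) (Set.range g')) :=
    new_lagrangian g hLag j₀ x₀ h₀
  set P : Fin n → V2 n := fun j => (g' j).1 with hP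
  set Q : Fin n → V2 n := fun j => (g' j).2 with hQ
  have hPQ : (fun j => (P j, Q j)) = g' := by funext j; rfl
  have hgj : ∀ j, j ≠ j₀ → g' j = g j + (symp x₀ (g j)) • g j₀ := by
    intro j hj; simp only [hg', if_neg hj]
  have hPj₀ : P j₀ = c := by simp [hP, hg', hx₀]
  have hQj₀ : Q j₀ = 0 := by simp [hQ, hg', hx₀]
  have hQc : ∀ j, j ≠ j₀ → dotZ2 c (Q j) = 0 := by
    intro j hj
    have : Q j = q j + (symp x₀ (g j)) • q j₀ := by
      simp only [hQ, hgj j hj, Prod.snd_add, Prod.smul_snd, hg]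
    rw [this, dotZ2_add_right, dotZ2_smul_right, hcq, mul_one, hS, zmod2_add_self]
  -- eigenvalue equations for ψ w.r.t. the new generators (away from j₀)
  have eigψ : ∀ j, j ≠ j₀ →
      ∃ l : ZMod 2, (W (P j) (Q j)).mulVec ψ = ((-1:ℂ))^l.val • ψ := by
    intro j hj
    rcases zmod2_cases (symp x₀ (g j)) with hS0 | hS1
    · have hgg : g' j = g j := by rw [hgj j hj, hS0, zero_smul, add_zero]
      have hP' : P j = p j := by rw [hP]; dsimp only; rw [hgg, hg]
      have hQ' : Q j = q j := by rw [hQ]; dsimp only; rw [hgg, hg]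
      exact ⟨lam j, by rw [hP', hQ']; exact heig j⟩
    · have hP' : P j = p j + p j₀ := by
        rw [hP]; dsimp only; rw [hgj j hj, hS1, one_smul, hg]; rfl
      have hQ' : Q j = q j + q j₀ := by
        rw [hQ]; dsimp only; rw [hgj j hj, hS1, one_smul, hg]; rfl
      obtain ⟨C, hC0, hC⟩ := W_add_mulVec (p j) (q j) (p j₀) (q j₀)
      have hCψ := hC ψ
      rw [heig j₀, Matrix.mulVec_smul, heig j, smul_smul, smul_smul] at hCψ
      rw [← hP', ← hQ'] at hCψ
      exact eig_pm _ _ ψ hψne _ hCψ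
  have l'ex : ∀ j, ∃ l : ZMod 2, j ≠ j₀ →
      (W (P j) (Q j)).mulVec ψ = ((-1:ℂ))^l.val • ψ := by
    intro j
    by_cases hj : j = j₀
    · exact ⟨0, fun h => absurd hj h⟩
    · obtain ⟨l, hl⟩ := eigψ j hj
      exact ⟨l, fun _ => hl⟩
  choose l' hl' using l'ex
  -- the split states
  set sq2 : ℂ := ((Real.sqrt 2 : ℝ) : ℂ) with hsq2def
  have hsq2 : sq2 ≠ 0 := by
    rw [hsq2def]
    simp only [ne_eq, Complex.ofReal_eq_zero]
    positivity
  set t₁ : V2 n → ℂ := fun z => if dotZ2 c z = 0 then sq2 * ψ z else 0 with ht₁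
  set t₂ : V2 n → ℂ := fun z => if dotZ2 c z = 1 then sq2 * ψ z else 0 with ht₂
  set l₁ : Fin n → ZMod 2 := fun j => if j = j₀ then 0 else l' j with hl₁
  set l₂ : Fin n → ZMod 2 := fun j => if j = j₀ then 1 else l' j with hl₂
  -- amplitude symmetry
  have habs : ∀ z, ‖ψ (z + q j₀)‖ = ‖ψ z‖ := by
    intro z
    have h1 := congrFun (heig j₀) z
    rw [W_mulVec, Pi.smul_apply, smul_eq_mul] at h1
    have h2 := congrArg (‖·‖) h1
    simpa [norm_mul, norm_pow, Complex.norm_I] using h2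
  have hψadd : ∀ z, ψ z ≠ 0 → ψ (z + q j₀) ≠ 0 := by
    intro z hz h0
    apply hz
    have := habs z
    rw [h0, norm_zero] at this
    exact norm_eq_zero.mp this.symm
  have hshift : ∀ z : V2 n, dotZ2 c (z + q j₀) = dotZ2 c z + 1 := by
    intro z; rw [dotZ2_add_right, hcq]
  -- the two halves of the squared norm agree
  have hbij : ∑ z ∈ Finset.univ.filter (fun z => dotZ2 c z = 0), ‖ψ z‖^2
      = ∑ z ∈ Finset.univ.filter (fun z => ¬ dotZ2 c z = 0), ‖ψ z‖^2 := by
    apply Finset.sum_bij' (fun z _ => z + q j₀) (fun z _ => z + q j₀)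
    · intro a ha
      rw [Finset.mem_filter] at ha ⊢
      refine ⟨Finset.mem_univ _, ?_⟩
      rw [hshift, ha.2]
      decide
    · intro a ha
      rw [Finset.mem_filter] at ha ⊢
      refine ⟨Finset.mem_univ _, ?_⟩
      rw [hshift]
      rcases zmod2_cases (dotZ2 c a) with h | h
      · exact absurd h ha.2
      · rw [h]; decide
    · intro a _; rw [add_assoc, V2.add_self, add_zero]
    · intro a _; rw [add_assoc, V2.add_self, add_zero]
    · intro a _; rw [habs]
  have htot : ∑ z ∈ Finset.univ.filter (fun z => dotZ2 c z = 0), ‖ψ z‖^2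
      + ∑ z ∈ Finset.univ.filter (fun z => ¬ dotZ2 c z = 0), ‖ψ z‖^2 = 1 := by
    rw [Finset.sum_filter_add_sum_filter_not]
    exact hnorm
  have hhalf : ∑ z ∈ Finset.univ.filter (fun z => dotZ2 c z = 0), ‖ψ z‖^2
      = 1/2 := by linarith [hbij, htot]
  have hhalf' : ∑ z ∈ Finset.univ.filter (fun z => ¬ dotZ2 c z = 0), ‖ψ z‖^2
      = 1/2 := by linarith [hbij, htot]
  have habs_sq2 : ∀ w : ℂ, ‖sq2 * w‖^2 = 2 * ‖w‖^2 := by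
    intro w
    rw [norm_mul, mul_pow, hsq2def, Complex.norm_real, Real.norm_eq_abs,
      abs_of_nonneg (Real.sqrt_nonneg 2), Real.sq_sqrt (by norm_num : (0:ℝ) ≤ 2)]
  -- norms of t₁ and t₂
  have hn1 : (∑ z, ‖t₁ z‖ ^ 2) = 1 := by
    have : ∀ z, ‖t₁ z‖^2
        = (if dotZ2 c z = 0 then 2 * ‖ψ z‖^2 else 0) := by
      intro z
      by_cases hz : dotZ2 c z = 0
      · rw [ht₁]; dsimp only; rw [if_pos hz, if_pos hz, habs_sq2]
      · rw [ht₁]; dsimp only; rw [if_neg hz, if_neg hz, norm_zero]; ring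
    rw [Finset.sum_congr rfl (fun z _ => this z), ← Finset.sum_filter, ← Finset.mul_sum,
      hhalf]
    norm_num
  have hn2 : (∑ z, ‖t₂ z‖ ^ 2) = 1 := by
    have : ∀ z, ‖t₂ z‖^2
        = (if ¬ dotZ2 c z = 0 then 2 * ‖ψ z‖^2 else 0) := by
      intro z
      by_cases hz : dotZ2 c z = 0
      · rw [ht₂]; dsimp only
        rw [if_neg (by rw [hz]; decide), if_neg (by exact fun h => h hz), norm_zero]
        ring
      · rw [ht₂]; dsimp only
        rw [if_pos ((zmod2_eq_one_iff _).mpr hz), if_pos hz, habs_sq2]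
    rw [Finset.sum_congr rfl (fun z _ => this z), ← Finset.sum_filter, ← Finset.mul_sum,
      hhalf']
    norm_num
  -- eigenvalue equations for t₁ and t₂
  have he1 : ∀ j, (W (P j) (Q j)).mulVec t₁ = ((-1 : ℂ) ^ (l₁ j).val) • t₁ := by
    intro j
    by_cases hj : j = j₀
    · subst hj
      rw [hPj₀, hQj₀]
      have hv : l₁ j = 0 := by simp [hl₁]
      rw [hv]
      apply diag_eig c 0 t₁
      intro z hz
      rw [ht₁]; dsimp only; rw [if_neg hz]
    · have hv : l₁ j = l' j := by simp [hl₁, hj]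
      rw [hv, ht₁]
      exact proj_eig (P j) (Q j) c (hQc j hj) ψ _ sq2 0 (hl' j hj)
  have he2 : ∀ j, (W (P j) (Q j)).mulVec t₂ = ((-1 : ℂ) ^ (l₂ j).val) • t₂ := by
    intro j
    by_cases hj : j = j₀
    · subst hj
      rw [hPj₀, hQj₀]
      have hv : l₂ j = 1 := by simp [hl₂]
      rw [hv]
      apply diag_eig c 1 t₂
      intro z hz
      rw [ht₂]; dsimp only; rw [if_neg hz]
    · have hv : l₂ j = l' j := by simp [hl₂, hj]
      rw [hv, ht₂]
      exact proj_eig (P j) (Q j) c (hQc j hj) ψ _ sq2 1 (hl' j hj)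
  -- orthogonality
  have horth : (∑ z, (starRingEnd ℂ) (t₁ z) * t₂ z) = 0 := by
    apply Finset.sum_eq_zero
    intro z _
    by_cases hz : dotZ2 c z = 0
    · have : t₂ z = 0 := by rw [ht₂]; dsimp only; rw [if_neg (by rw [hz]; decide)]
      rw [this, mul_zero]
    · have : t₁ z = 0 := by rw [ht₁]; dsimp only; rw [if_neg hz]
      rw [this, map_zero, zero_mul]
  -- support characterisations
  have hch1 : ∀ z, t₁ z ≠ 0 ↔ (dotZ2 c z = 0 ∧ ψ z ≠ 0) := by
    intro z
    rw [ht₁]; dsimp only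
    by_cases hz : dotZ2 c z = 0
    · rw [if_pos hz]
      constructor
      · intro h; exact ⟨hz, fun h0 => h (by rw [h0, mul_zero])⟩
      · intro h; exact mul_ne_zero hsq2 h.2
    · rw [if_neg hz]; simp [hz]
  have hch2 : ∀ z, t₂ z ≠ 0 ↔ (¬ dotZ2 c z = 0 ∧ ψ z ≠ 0) := by
    intro z
    rw [ht₂]; dsimp only
    by_cases hz : dotZ2 c z = 0
    · rw [if_neg (by rw [hz]; decide)]
      simp [hz]
    · rw [if_pos ((zmod2_eq_one_iff _).mpr hz)]
      constructor
      · intro h; exact ⟨hz, fun h0 => h (by rw [h0, mul_zero])⟩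
      · intro h; exact mul_ne_zero hsq2 h.2
  -- cardinalities
  have hsupp' : (Finset.univ.filter fun z : V2 n => ψ z ≠ 0).card = 2 ^ r := by
    rw [← hsupp, Nat.card_eq_fintype_card, Fintype.card_subtype]
  set T₁ : Finset (V2 n) := Finset.univ.filter (fun z => t₁ z ≠ 0) with hT₁
  set T₂ : Finset (V2 n) := Finset.univ.filter (fun z => t₂ z ≠ 0) with hT₂
  have hcard12 : T₁.card = T₂.card := by
    apply Finset.card_bij' (fun z _ => z + q j₀) (fun z _ => z + q j₀)
    · intro a ha
      rw [hT₁, Finset.mem_filter] at ha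
      rw [hT₂, Finset.mem_filter]
      obtain ⟨hc0, hane⟩ := (hch1 a).mp ha.2
      refine ⟨Finset.mem_univ _, (hch2 _).mpr ⟨?_, hψadd a hane⟩⟩
      rw [hshift, hc0]
      decide
    · intro a ha
      rw [hT₂, Finset.mem_filter] at ha
      rw [hT₁, Finset.mem_filter]
      obtain ⟨hc0, hane⟩ := (hch2 a).mp ha.2
      refine ⟨Finset.mem_univ _, (hch1 _).mpr ⟨?_, hψadd a hane⟩⟩
      rw [hshift]
      rcases zmod2_cases (dotZ2 c a) with h | h
      · exact absurd h hc0
      · rw [h]; decide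
    · intro a _; rw [add_assoc, V2.add_self, add_zero]
    · intro a _; rw [add_assoc, V2.add_self, add_zero]
  have hT₁eq : T₁ = (Finset.univ.filter fun z : V2 n => ψ z ≠ 0).filter
      (fun z => dotZ2 c z = 0) := by
    rw [hT₁]
    ext z
    simp only [Finset.mem_filter, Finset.mem_univ, true_and]
    rw [hch1 z]
    tauto
  have hT₂eq : T₂ = (Finset.univ.filter fun z : V2 n => ψ z ≠ 0).filter
      (fun z => ¬ dotZ2 c z = 0) := by
    rw [hT₂]
    ext z
    simp only [Finset.mem_filter, Finset.mem_univ, true_and]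
    rw [hch2 z]
    tauto
  have hsum12 : T₁.card + T₂.card = 2 ^ r := by
    rw [hT₁eq, hT₂eq, Finset.card_filter_add_card_filter_not, hsupp']
  have hc1 : T₁.card = 2 ^ (r - 1) := by
    have hpow : 2 ^ r = 2 * 2 ^ (r - 1) := by
      rw [← pow_succ']
      congr 1
      omega
    apply Nat.eq_of_mul_eq_mul_left (show 0 < 2 by norm_num)
    rw [← hpow, ← hsum12, two_mul, hcard12]
  have hc2 : T₂.card = 2 ^ (r - 1) := by rw [← hcard12]; exact hc1
  -- assemble
  refine ⟨t₁, t₂, P, Q, l₁, l₂, ?_, hn1, hn2, he1, he2, horth, ?_, ?_, ?_, ?_⟩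
  · rw [hPQ]; exact hLag'
  · rw [Nat.card_eq_fintype_card, Fintype.card_subtype, ← hT₁, hc1]
  · rw [Nat.card_eq_fintype_card, Fintype.card_subtype, ← hT₂, hc2]
  · intro z h1
    obtain ⟨hz0, -⟩ := (hch1 z).mp h1
    rw [ht₂]; dsimp only
    rw [if_neg (by rw [hz0]; decide)]
  · funext z
    rw [Pi.smul_apply, Pi.add_apply, smul_eq_mul]
    rcases zmod2_cases (dotZ2 c z) with hz | hz
    · have h1 : t₁ z = sq2 * ψ z := by rw [ht₁]; dsimp only; rw [if_pos hz]
      have h2 : t₂ z = 0 := by rw [ht₂]; dsimp only; rw [if_neg (by rw [hz]; decide)]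
      rw [h1, h2, add_zero, ← mul_assoc, inv_mul_cancel₀ hsq2, one_mul]
    · have h1 : t₁ z = 0 := by
        rw [ht₁]; dsimp only; rw [if_neg (by rw [hz]; decide)]
      have h2 : t₂ z = sq2 * ψ z := by rw [ht₂]; dsimp only; rw [if_pos hz]
      rw [h1, h2, zero_add, ← mul_assoc, inv_mul_cancel₀ hsq2, one_mul]
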